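/- arXiv:1111.2817 — 2 statements merged into one kernel-verified Lean document; each statement's English description precedes it below -/
import Mathlib

section
/- Let f : ℕ → ℝ and define ⟨x⟩_j = x·(x - f(1))·(x - f(2))···(x - f(j-1)) with ⟨x⟩_0 = 1. Then for all n ≥ 0, x^n = ∑_{j=0}^{n} h_{n-j}(f(1),...,f(j)) · ⟨x⟩_j as polynomials in x over ℝ. -/
/-- The `r`-th complete homogeneous symmetric polynomial in the variables
`x 1, …, x k`. -/
def hsymmF {R : Type*} [CommRing R] (x : ℕ → R) (k r : ℕ) : R :=
  ∑ c ∈ Finset.Nat.antidiagonalTuple k r, ∏ i : Fin k, x ((i : ℕ) + 1) ^ c i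

/-- The generalized falling factorial `⟨x⟩_j = x (x - f 1) (x - f 2) ⋯ (x - f (j-1))`,
with `⟨x⟩_0 = 1`. -/
noncomputable def fallF (f : ℕ → ℝ) (j : ℕ) : Polynomial ℝ :=
  ∏ i ∈ Finset.range j,
    (Polynomial.X - Polynomial.C (if i = 0 then 0 else f i))

lemma hsymm_snoc {R : Type*} [CommRing R] (x : ℕ → R) (k r : ℕ) :
    hsymmF x (k+1) r = ∑ j ∈ Finset.range (r+1), x (k+1) ^ j * hsymmF x k (r - j) := by
  unfold hsymmF
  simp_rw [Finset.mul_sum]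
  rw [Finset.sum_sigma']
  symm
  apply Finset.sum_nbij' (i := fun p : Σ _ : ℕ, Fin k → ℕ => Fin.snoc p.2 p.1)
    (j := fun c => ⟨c (Fin.last k), Fin.init c⟩)
  · rintro ⟨j, c⟩ hp
    simp only [Finset.mem_sigma, Finset.mem_range, Finset.Nat.mem_antidiagonalTuple] at hp
    rw [Finset.Nat.mem_antidiagonalTuple, Fin.sum_univ_castSucc]
    simp only [Fin.snoc_castSucc, Fin.snoc_last]
    omega
  · intro c hc
    rw [Finset.Nat.mem_antidiagonalTuple] at hc
    rw [Fin.sum_univ_castSucc] at hc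
    simp only [Finset.mem_sigma, Finset.mem_range, Finset.Nat.mem_antidiagonalTuple]
    constructor
    · omega
    · have : ∑ i : Fin k, Fin.init c i = ∑ i : Fin k, c i.castSucc := by
        simp [Fin.init]
      omega
  · rintro ⟨j, c⟩ hp
    ext
    · simp
    · simp [Fin.init_snoc]
  · intro c hc
    simp [Fin.snoc_init_self]
  · rintro ⟨j, c⟩ hp
    rw [Fin.prod_univ_castSucc]
    simp only [Fin.snoc_castSucc, Fin.snoc_last, Fin.val_last, Fin.coe_castSucc]
    ring

lemma hsymm_zero_right {R : Type*} [CommRing R] (x : ℕ → R) (k : ℕ) :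
    hsymmF x k 0 = 1 := by
  simp [hsymmF, Finset.Nat.antidiagonalTuple_zero_right]

lemma hsymm_zero_succ {R : Type*} [CommRing R] (x : ℕ → R) (r : ℕ) :
    hsymmF x 0 (r + 1) = 0 := by
  simp [hsymmF, Finset.Nat.antidiagonalTuple_zero_succ]

lemma hsymm_rec {R : Type*} [CommRing R] (x : ℕ → R) (k r : ℕ) :
    hsymmF x (k+1) (r+1) = hsymmF x k (r+1) + x (k+1) * hsymmF x (k+1) r := by
  rw [hsymm_snoc, hsymm_snoc x k r, Finset.sum_range_succ']
  simp only [pow_zero, one_mul, Nat.sub_zero, Nat.succ_sub_succ, Finset.mul_sum]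
  rw [add_comm]
  congr 1
  apply Finset.sum_congr rfl
  intro j hj
  ring

theorem pow_eq_sum_hsymm_fall (f : ℕ → ℝ) (n : ℕ) :
    (Polynomial.X : Polynomial ℝ) ^ n =
      ∑ j ∈ Finset.range (n + 1),
        Polynomial.C (hsymmF f j (n - j)) * fallF f j := by
  induction n with
  | zero =>
    simp [hsymm_zero_right, fallF]
  | succ n ih =>
    have key : ∀ j : ℕ, (Polynomial.X : Polynomial ℝ) * fallF f j =
        fallF f (j+1) + Polynomial.C (if j = 0 then 0 else f j) * fallF f j := by
      intro j
      rw [fallF, fallF, Finset.prod_range_succ]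
      ring
    have step1 : (Polynomial.X : Polynomial ℝ) ^ (n+1)
        = ∑ j ∈ Finset.range (n+1), (Polynomial.C (hsymmF f j (n-j)) * fallF f (j+1)
            + Polynomial.C (if j = 0 then 0 else f j) * Polynomial.C (hsymmF f j (n-j)) * fallF f j) := by
      rw [pow_succ, ih, Finset.sum_mul]
      apply Finset.sum_congr rfl
      intro j _
      have := key j
      calc Polynomial.C (hsymmF f j (n-j)) * fallF f j * Polynomial.X
          = Polynomial.C (hsymmF f j (n-j)) * (Polynomial.X * fallF f j) := by ring
        _ = _ := by rw [this]; ring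
    rw [step1, Finset.sum_add_distrib]
    -- second sum: peel j = 0 (which is zero)
    have snd : ∑ j ∈ Finset.range (n+1),
        Polynomial.C (if j = 0 then 0 else f j) * Polynomial.C (hsymmF f j (n-j)) * fallF f j
        = ∑ j ∈ Finset.range n,
            Polynomial.C (f (j+1)) * Polynomial.C (hsymmF f (j+1) (n-j-1)) * fallF f (j+1) := by
      rw [Finset.sum_range_succ']
      simp [Nat.sub_sub]
    rw [snd]
    -- target: peel j = 0 (which is zero)
    rw [Finset.sum_range_succ' _ (n+1)]
    have h0 : Polynomial.C (hsymmF f 0 (n + 1 - 0)) * fallF f 0 = 0 := by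
      simp [hsymm_zero_succ]
    rw [h0, add_zero]
    -- now both sides are sums over range (n+1) of terms at fall (j+1); peel j = n
    rw [Finset.sum_range_succ, Finset.sum_range_succ _ n]
    have htop : hsymmF f (n + 1) (n + 1 - (n + 1)) = hsymmF f n (n - n) := by
      simp [hsymm_zero_right]
    rw [htop]
    rw [add_assoc, add_comm (Polynomial.C (hsymmF f n (n-n)) * fallF f (n+1)), ← add_assoc, ← Finset.sum_add_distrib]
    congr 1
    apply Finset.sum_congr rfl
    intro j hj
    rw [Finset.mem_range] at hj
    have hr : n - j = (n - j - 1) + 1 := by omega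
    have h2 : n + 1 - (j + 1) = (n - j - 1) + 1 := by omega
    rw [h2, hsymm_rec]
    rw [Polynomial.C_add, Polynomial.C_mul]
    rw [← hr]
    ring
end

section
/- For all n, j ∈ ℕ and all real z, x^n = ∑_{j=0}^{n} JS_n^{(j)}(z) · ∏_{i=0}^{j-1}(x - i(z+i)) as polynomials in x. -/
/-- The Jacobi-Stirling numbers of the second kind `JS z n j = JS_n^{(j)}(z)`,
defined by the recurrence `JS_n^{(j)} = JS_{n-1}^{(j-1)} + j(j+z) JS_{n-1}^{(j)}`. -/
noncomputable def JS (z : ℝ) : ℕ → ℕ → ℝ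
  | 0, 0 => 1
  | 0, _ + 1 => 0
  | _ + 1, 0 => 0
  | n + 1, j + 1 =>
      JS z n j + ((j : ℝ) + 1) * (((j : ℝ) + 1) + z) * JS z n (j + 1)

lemma JS_eq_zero (z : ℝ) : ∀ n j, n < j → JS z n j = 0 := by
  intro n
  induction n with
  | zero =>
    intro j hj
    match j, hj with
    | j + 1, _ => simp [JS]
  | succ n ih =>
    intro j hj
    match j, hj with
    | j + 1, hj =>
      have h1 : n < j := by omega
      have h2 : n < j + 1 := by omega
      simp [JS, ih _ h1, ih _ h2]

theorem pow_eq_sum_JS (z : ℝ) (n : ℕ) :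
    (Polynomial.X : Polynomial ℝ) ^ n =
      ∑ j ∈ Finset.range (n + 1), Polynomial.C (JS z n j) *
        ∏ i ∈ Finset.range j,
          (Polynomial.X - Polynomial.C ((i : ℝ) * (z + (i : ℝ)))) := by
  set f : ℕ → Polynomial ℝ :=
    fun j => ∏ i ∈ Finset.range j,
      (Polynomial.X - Polynomial.C ((i : ℝ) * (z + (i : ℝ)))) with hf
  induction n with
  | zero => simp [JS, hf]
  | succ n ih =>
    have key : ∀ j : ℕ, (Polynomial.X : Polynomial ℝ) * f j =
        f (j + 1) + Polynomial.C ((j : ℝ) * (z + (j : ℝ))) * f j := by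
      intro j
      rw [hf]
      simp only [Finset.prod_range_succ]
      ring
    have step1 : (Polynomial.X : Polynomial ℝ) ^ (n + 1) =
        ∑ j ∈ Finset.range (n + 1),
          (Polynomial.C (JS z n j) * f (j + 1) +
            Polynomial.C (JS z n j * ((j : ℝ) * (z + (j : ℝ)))) * f j) := by
      have : (Polynomial.X : Polynomial ℝ) ^ (n + 1) =
          Polynomial.X * (Polynomial.X : Polynomial ℝ) ^ n := by ring
      rw [this, ih, Finset.mul_sum]
      refine Finset.sum_congr rfl fun j _ => ?_
      rw [show (Polynomial.X : Polynomial ℝ) * (Polynomial.C (JS z n j) * f j)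
            = Polynomial.C (JS z n j) * (Polynomial.X * f j) by ring,
        key j]
      simp only [Polynomial.C_mul, Polynomial.C_add]
      ring
    rw [step1]
    have splitL : ∑ j ∈ Finset.range (n + 1),
        (Polynomial.C (JS z n j) * f (j + 1) +
          Polynomial.C (JS z n j * ((j : ℝ) * (z + (j : ℝ)))) * f j)
        = (∑ j ∈ Finset.range (n + 1), Polynomial.C (JS z n j) * f (j + 1)) +
          ∑ j ∈ Finset.range (n + 1),
            Polynomial.C (JS z n j * ((j : ℝ) * (z + (j : ℝ)))) * f j :=
      Finset.sum_add_distrib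
    rw [splitL]
    -- reindex the second sum
    have reidx : ∑ j ∈ Finset.range (n + 1),
        Polynomial.C (JS z n j * ((j : ℝ) * (z + (j : ℝ)))) * f j
        = ∑ j ∈ Finset.range (n + 1),
            Polynomial.C (JS z n (j + 1) *
              (((j : ℝ) + 1) * (z + ((j : ℝ) + 1)))) * f (j + 1) := by
      rw [Finset.sum_range_succ' (fun j =>
        Polynomial.C (JS z n j * ((j : ℝ) * (z + (j : ℝ)))) * f j) n]
      rw [Finset.sum_range_succ (fun j =>
        Polynomial.C (JS z n (j + 1) *
          (((j : ℝ) + 1) * (z + ((j : ℝ) + 1)))) * f (j + 1)) n]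
      simp [JS_eq_zero z n (n + 1) (by omega)]
    rw [reidx, ← Finset.sum_add_distrib]
    rw [Finset.sum_range_succ' (fun j => Polynomial.C (JS z (n + 1) j) * f j) (n + 1)]
    simp only [JS, Polynomial.C_0, zero_mul, add_zero]
    refine (Finset.sum_congr rfl fun j _ => ?_).symm
    simp only [Polynomial.C_add, Polynomial.C_mul]
    ring
end
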